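/- After Alice's nonselective measurement {M_A(k)}_{k=±1} on the thermal state ρ of the XY Hamiltonian H, the average energy is E_A = Tr(H·Σ_k M_A(k)ρM_A(k)) = −B·sinh(βB)/Z − α·sinh(βα)/Z, so the energy injected by the measurement is ΔE_inf = E_A − Tr(Hρ) = B·sinh(βB)/Z + α·sinh(βα)/Z ≥ 0. -/

import Mathlib

/-!
The Hamiltonian conserves the number of excitations: in the frame |00⟩, |01⟩ + |10⟩,
|01⟩ − |10⟩, |11⟩ it is diagonal with eigenvalues B, α, −α, −B. Exponentiating in that frame
gives e^{−βH} in closed form, with a cosh/sinh block on the one-excitation sector, and both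
energies become finite trace computations.
-/

open Matrix
open scoped Kronecker

noncomputable section

/-- Pauli matrices -/
def σx : Matrix (Fin 2) (Fin 2) ℂ := !![0, 1; 1, 0]
def σy : Matrix (Fin 2) (Fin 2) ℂ := !![0, -Complex.I; Complex.I, 0]
def σz : Matrix (Fin 2) (Fin 2) ℂ := !![1, 0; 0, -1]

/-- Raising and lowering operators σ± = (σx ± i σy)/2 -/
def σp : Matrix (Fin 2) (Fin 2) ℂ := (2 : ℂ)⁻¹ • (σx + Complex.I • σy)
def σm : Matrix (Fin 2) (Fin 2) ℂ := (2 : ℂ)⁻¹ • (σx - Complex.I • σy)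

/-- XY Hamiltonian H = (B/2)(σz⊗I + I⊗σz) + α(σ₊⊗σ₋ + σ₋⊗σ₊) -/
def Ham (B α : ℝ) : Matrix (Fin 2 × Fin 2) (Fin 2 × Fin 2) ℂ :=
  ((B : ℂ) / 2) • (σz ⊗ₖ (1 : Matrix (Fin 2) (Fin 2) ℂ) + (1 : Matrix (Fin 2) (Fin 2) ℂ) ⊗ₖ σz)
    + (α : ℂ) • (σp ⊗ₖ σm + σm ⊗ₖ σp)

/-- Standard basis kets -/
def ket (a : Fin 2) : Fin 2 → ℂ := fun i => if i = a then 1 else 0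
def ket2 (a b : Fin 2) : Fin 2 × Fin 2 → ℂ := fun p => ket a p.1 * ket b p.2

/-- Bell states (|01⟩ ± |10⟩)/√2 -/
def ψplus : Fin 2 × Fin 2 → ℂ := ((Real.sqrt 2 : ℂ))⁻¹ • (ket2 0 1 + ket2 1 0)
def ψminus : Fin 2 × Fin 2 → ℂ := ((Real.sqrt 2 : ℂ))⁻¹ • (ket2 0 1 - ket2 1 0)

/-- Alice's measurement operators M_A(k) = ((I + k σx)/2) ⊗ I -/
def MA (k : ℝ) : Matrix (Fin 2 × Fin 2) (Fin 2 × Fin 2) ℂ :=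
  ((2 : ℂ)⁻¹ • ((1 : Matrix (Fin 2) (Fin 2) ℂ) + (k : ℂ) • σx)) ⊗ₖ (1 : Matrix (Fin 2) (Fin 2) ℂ)

/-- Partition function Z = 2(cosh βα + cosh βB) -/
def Zf (β B α : ℝ) : ℝ := 2 * (Real.cosh (β * α) + Real.cosh (β * B))

/-- Thermal state ρ = e^{-βH}/Z -/
def ρth (β B α : ℝ) : Matrix (Fin 2 × Fin 2) (Fin 2 × Fin 2) ℂ :=
  ((Zf β B α : ℂ))⁻¹ • NormedSpace.exp ((-(β : ℂ)) • Ham B α)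

/-- Bob's local unitary U_B(θ,k) = cos θ · I + i k sin θ (I⊗σy) -/
def UB (θ k : ℝ) : Matrix (Fin 2 × Fin 2) (Fin 2 × Fin 2) ℂ :=
  (Real.cos θ : ℂ) • (1 : Matrix (Fin 2 × Fin 2) (Fin 2 × Fin 2) ℂ)
    + (Complex.I * k * Real.sin θ) • ((1 : Matrix (Fin 2) (Fin 2) ℂ) ⊗ₖ σy)

end

noncomputable section

noncomputable section

theorem Matrix.exp_conj_of_mul_eq_one {m 𝔸 : Type*} [Fintype m] [DecidableEq m]
    [NormedCommRing 𝔸] [NormedAlgebra ℚ 𝔸] [CompleteSpace 𝔸] {U W : Matrix m m 𝔸}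
    (hUW : U * W = 1) (A : Matrix m m 𝔸) :
    NormedSpace.exp (U * A * W) = U * NormedSpace.exp A * W := by
  obtain rfl := Matrix.inv_eq_right_inv hUW
  exact Matrix.exp_conj U A
    ((Matrix.isUnit_iff_isUnit_det U).2 (Matrix.isUnit_det_of_right_inverse hUW))

theorem Real.mul_sinh_mul_nonneg {β : ℝ} (hβ : 0 ≤ β) (x : ℝ) : 0 ≤ x * Real.sinh (β * x) := by
  rcases le_total 0 x with hx | hx
  · exact mul_nonneg hx (Real.sinh_nonneg_iff.2 (mul_nonneg hβ hx))
  · exact mul_nonneg_of_nonpos_of_nonpos hx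
      (Real.sinh_nonpos_iff.2 (mul_nonpos_of_nonneg_of_nonpos hβ hx))

/- `finProdFinEquiv` sends `(a, b)` to `2 * a + b`, so the rows and columns of the 4 × 4 literals
below are ordered |00⟩, |01⟩, |10⟩, |11⟩. -/
def bellFrame : Matrix (Fin 2 × Fin 2) (Fin 2 × Fin 2) ℂ :=
  (!![1, 0, 0, 0; 0, 1, 1, 0; 0, 1, -1, 0; 0, 0, 0, 1] : Matrix (Fin 4) (Fin 4) ℂ).submatrix
    finProdFinEquiv finProdFinEquiv

def bellFrameInv : Matrix (Fin 2 × Fin 2) (Fin 2 × Fin 2) ℂ :=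
  (!![1, 0, 0, 0; 0, 1/2, 1/2, 0; 0, 1/2, -1/2, 0; 0, 0, 0, 1] : Matrix (Fin 4) (Fin 4) ℂ).submatrix
    finProdFinEquiv finProdFinEquiv

def hamEigenvalues (B α : ℝ) : Fin 2 × Fin 2 → ℂ :=
  ![(B : ℂ), α, -α, -B] ∘ finProdFinEquiv

theorem bellFrame_mul_bellFrameInv : bellFrame * bellFrameInv = 1 := by
  ext ⟨a, b⟩ ⟨c, d⟩
  fin_cases a <;> fin_cases b <;> fin_cases c <;> fin_cases d <;>
    simp [bellFrame, bellFrameInv, finProdFinEquiv, Matrix.mul_apply, Fintype.sum_prod_type] <;>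
    norm_num

theorem Ham_eq_conj_diagonal (B α : ℝ) :
    Ham B α = bellFrame * diagonal (hamEigenvalues B α) * bellFrameInv := by
  ext ⟨a, b⟩ ⟨c, d⟩
  fin_cases a <;> fin_cases b <;> fin_cases c <;> fin_cases d <;>
    simp [bellFrame, bellFrameInv, finProdFinEquiv, hamEigenvalues, Ham, σp, σm, σx, σy, σz,
      Matrix.mul_apply, Fintype.sum_prod_type, Matrix.diagonal_apply] <;>
    ring

def boltzmannOp (β B α : ℝ) : Matrix (Fin 2 × Fin 2) (Fin 2 × Fin 2) ℂ :=
  (!![(Real.exp (-(β * B)) : ℂ), 0, 0, 0;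
      0, (Real.cosh (β * α) : ℂ), (-Real.sinh (β * α) : ℂ), 0;
      0, (-Real.sinh (β * α) : ℂ), (Real.cosh (β * α) : ℂ), 0;
      0, 0, 0, (Real.exp (β * B) : ℂ)] : Matrix (Fin 4) (Fin 4) ℂ).submatrix
    finProdFinEquiv finProdFinEquiv

theorem exp_neg_smul_Ham (β B α : ℝ) :
    NormedSpace.exp ((-(β : ℂ)) • Ham B α) = boltzmannOp β B α := by
  rw [Ham_eq_conj_diagonal, ← Matrix.smul_mul, ← Matrix.mul_smul, ← diagonal_smul,
    Matrix.exp_conj_of_mul_eq_one bellFrame_mul_bellFrameInv, Matrix.exp_diagonal]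
  ext ⟨a, b⟩ ⟨c, d⟩
  fin_cases a <;> fin_cases b <;> fin_cases c <;> fin_cases d <;>
    simp [bellFrame, bellFrameInv, finProdFinEquiv, hamEigenvalues, boltzmannOp,
      Matrix.mul_apply, Fintype.sum_prod_type, Matrix.diagonal_apply, ← Complex.exp_eq_exp_ℂ,
      Real.cosh_eq, Real.sinh_eq, Complex.ofReal_exp] <;>
    ring

theorem trace_Ham_mul_boltzmannOp (β B α : ℝ) :
    (Ham B α * boltzmannOp β B α).trace
      = ((-(2 * B * Real.sinh (β * B)) - 2 * α * Real.sinh (β * α) : ℝ) : ℂ) := by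
  simp [Matrix.trace, Matrix.mul_apply, Fintype.sum_prod_type, Ham, boltzmannOp, finProdFinEquiv,
    σp, σm, σx, σy, σz, Matrix.one_apply, Real.cosh_eq, Real.sinh_eq]
  ring

theorem trace_Ham_mul_measured_boltzmannOp (β B α : ℝ) :
    (Ham B α * (MA 1 * boltzmannOp β B α * MA 1 + MA (-1) * boltzmannOp β B α * MA (-1))).trace
      = ((-(B * Real.sinh (β * B)) - α * Real.sinh (β * α) : ℝ) : ℂ) := by
  simp [Matrix.trace, Matrix.mul_apply, Fintype.sum_prod_type, Ham, MA, boltzmannOp,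
    finProdFinEquiv, σp, σm, σx, σy, σz, Matrix.one_apply, Real.cosh_eq, Real.sinh_eq]
  ring

theorem Zf_pos (β B α : ℝ) : 0 < Zf β B α := by
  unfold Zf
  positivity

theorem energy_injected_by_measurement_general (β B α : ℝ) (hβ : 0 < β) :
    let Z : ℝ := Zf β B α
    let EA : ℂ := (Ham B α *
      (MA 1 * ρth β B α * MA 1 + MA (-1) * ρth β B α * MA (-1))).trace
    EA = ((-(B * Real.sinh (β * B) / Z) - α * Real.sinh (β * α) / Z : ℝ) : ℂ) ∧
    EA - (Ham B α * ρth β B α).trace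
      = ((B * Real.sinh (β * B) / Z + α * Real.sinh (β * α) / Z : ℝ) : ℂ) ∧
    0 ≤ B * Real.sinh (β * B) / Z + α * Real.sinh (β * α) / Z := by
  intro Z EA
  have hZ : (Z : ℂ) ≠ 0 := Complex.ofReal_ne_zero.2 (Zf_pos β B α).ne'
  have hρ : ρth β B α = (Z : ℂ)⁻¹ • boltzmannOp β B α := by rw [ρth, exp_neg_smul_Ham]
  have hEA : EA = (Z : ℂ)⁻¹ * ((-(B * Real.sinh (β * B)) - α * Real.sinh (β * α) : ℝ) : ℂ) := by
    simp only [EA, hρ, Matrix.mul_smul, Matrix.smul_mul, ← smul_add, Matrix.trace_smul,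
      trace_Ham_mul_measured_boltzmannOp, smul_eq_mul]
  have hE : (Ham B α * ρth β B α).trace
      = (Z : ℂ)⁻¹ * ((-(2 * B * Real.sinh (β * B)) - 2 * α * Real.sinh (β * α) : ℝ) : ℂ) := by
    rw [hρ, Matrix.mul_smul, Matrix.trace_smul, smul_eq_mul, trace_Ham_mul_boltzmannOp]
  refine ⟨?_, ?_, ?_⟩
  · rw [hEA]
    push_cast
    field_simp
  · rw [hEA, hE]
    push_cast
    field_simp
    ring
  · have hZ_nonneg : 0 ≤ Z := (Zf_pos β B α).le
    exact add_nonneg (div_nonneg (Real.mul_sinh_mul_nonneg hβ.le B) hZ_nonneg)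
      (div_nonneg (Real.mul_sinh_mul_nonneg hβ.le α) hZ_nonneg)

/-- After Alice's nonselective measurement on the thermal state, the average energy is
    E_A = -B sinh(βB)/Z - α sinh(βα)/Z, so the injected energy
    ΔE = E_A - Tr(Hρ) = B sinh(βB)/Z + α sinh(βα)/Z is nonnegative. -/
theorem energy_injected_by_measurement (β B α : ℝ) (hβ : 0 < β) (hB : 0 < B) (hα : 0 < α) :
    let Z : ℝ := Zf β B α
    let EA : ℂ := (Ham B α *
      (MA 1 * ρth β B α * MA 1 + MA (-1) * ρth β B α * MA (-1))).trace
    EA = ((-(B * Real.sinh (β * B) / Z) - α * Real.sinh (β * α) / Z : ℝ) : ℂ) ∧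
    EA - (Ham B α * ρth β B α).trace
      = ((B * Real.sinh (β * B) / Z + α * Real.sinh (β * α) / Z : ℝ) : ℂ) ∧
    0 ≤ B * Real.sinh (β * B) / Z + α * Real.sinh (β * α) / Z :=
  energy_injected_by_measurement_general β B α hβ

end
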